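/- arXiv:2512.03313 — 5 statements merged into one kernel-verified Lean document; each statement's English description precedes it below -/
import Mathlib

section
/- Let α > 1, p = 1/(α−1), σ = (π/4)·min{1, 1/p}, and λ > 0. Define f_λ(x) = 0 for x ≤ 0 and f_λ(x) = exp(−λ√2 · x^{−p}) for x > 0. Then for every k ∈ ℕ and every x > 0, |f_λ^{(k)}(x)| ≤ (2/sin σ)^k · (k/(λ p e))^{k/p} · k!. -/
open Real

/-- The one-sided Gevrey bump factor: f_λ(x) = 0 for x ≤ 0 and
f_λ(x) = exp(−λ√2 · x^{−p}) for x > 0. -/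
noncomputable def flam (lam p : ℝ) (x : ℝ) : ℝ :=
  if x ≤ 0 then 0 else Real.exp (-(lam * Real.sqrt 2 * x ^ (-p)))

lemma cauchy_est {F : ℂ → ℂ} {c : ℂ} {r C : ℝ} (hr : 0 < r)
    (hd : ∀ z ∈ Metric.closedBall c r, DifferentiableAt ℂ F z)
    (hb : ∀ z ∈ Metric.sphere c r, ‖F z‖ ≤ C) (k : ℕ) :
    ‖iteratedDeriv k F c‖ ≤ (Nat.factorial k) * C / r ^ k := by
  lift r to NNReal using hr.le with R
  have hR : 0 < R := by exact_mod_cast hr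
  have h : HasFPowerSeriesOnBall F (cauchyPowerSeries F c R) c R :=
    Complex.hasFPowerSeriesOnBall_of_differentiable_off_countable (s := ∅)
      Set.countable_empty
      (fun z hz => (hd z hz).continuousAt.continuousWithinAt)
      (fun z hz => hd z (Metric.ball_subset_closedBall hz.1)) hR
  have key : (Nat.factorial k) • (cauchyPowerSeries F c R k fun _ => (1:ℂ))
      = iteratedFDeriv ℂ k F c fun _ => (1:ℂ) := h.factorial_smul 1 k
  have h1 : iteratedDeriv k F c = iteratedFDeriv ℂ k F c fun _ => (1:ℂ) :=
    iteratedDeriv_eq_iteratedFDeriv ..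
  have hnorm : ‖iteratedDeriv k F c‖
      = (Nat.factorial k) * ‖cauchyPowerSeries F c R k fun _ => (1:ℂ)‖ := by
    rw [h1, ← key, ← Nat.cast_smul_eq_nsmul ℝ, norm_smul]
    simp
  have hC : 0 ≤ C := by
    have := hb (c + R) (by
      simp [Metric.mem_sphere, dist_eq_norm, Complex.norm_real, abs_of_nonneg R.2])
    exact le_trans (norm_nonneg _) this
  have happ : ‖cauchyPowerSeries F c R k fun _ => (1:ℂ)‖ ≤ ‖cauchyPowerSeries F c R k‖ := by
    have := (cauchyPowerSeries F c R k).le_opNorm fun _ => (1:ℂ)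
    simpa using this
  have hint : (∫ θ : ℝ in (0)..2 * π, ‖F (circleMap c R θ)‖) ≤ 2 * π * C := by
    have : (∫ θ : ℝ in (0)..2 * π, ‖F (circleMap c R θ)‖)
        ≤ ∫ _ : ℝ in (0)..2 * π, C := by
      apply intervalIntegral.integral_mono_on Real.two_pi_pos.le
      · have hcont : Continuous fun θ : ℝ => F (circleMap c R θ) := by
          rw [continuous_iff_continuousAt]
          intro θ
          exact ((hd _ (Metric.sphere_subset_closedBall
            (circleMap_mem_sphere c R.2 θ))).continuousAt).comp
            (continuous_circleMap c R).continuousAt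
        exact hcont.norm.intervalIntegrable 0 (2*π)
      · exact intervalIntegrable_const
      · intro θ _
        exact hb _ (circleMap_mem_sphere c R.2 θ)
    simpa [mul_comm] using this
  have hps : ‖cauchyPowerSeries F c R k‖ ≤ C * (R:ℝ)⁻¹ ^ k := by
    refine (norm_cauchyPowerSeries_le F c R k).trans ?_
    have habs : |(R:ℝ)| = (R:ℝ) := abs_of_nonneg R.coe_nonneg
    rw [habs]
    have h2 : (2 * π)⁻¹ * (∫ θ : ℝ in (0)..2 * π, ‖F (circleMap c R θ)‖) ≤ C := by
      rw [inv_mul_le_iff₀ Real.two_pi_pos]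
      linarith [hint]
    exact mul_le_mul_of_nonneg_right h2 (by positivity)
  rw [hnorm]
  rw [div_eq_mul_inv, mul_assoc, ← inv_pow]
  exact mul_le_mul_of_nonneg_left (happ.trans hps) (by positivity)

lemma pow_mul_exp_neg_le {a u : ℝ} (ha : 0 ≤ a) (hu : 0 < u) :
    u ^ a * Real.exp (-u) ≤ (a / Real.exp 1) ^ a := by
  rcases eq_or_lt_of_le ha with h | ha
  · rw [← h]
    simp only [Real.rpow_zero, one_mul]
    exact Real.exp_le_one_iff.2 (by linarith)
  · have hL : 0 < u ^ a * Real.exp (-u) := by positivity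
    have hR : (0:ℝ) < (a / Real.exp 1) ^ a := by positivity
    rw [← Real.log_le_log_iff hL hR, Real.log_mul (by positivity) (Real.exp_ne_zero _),
      Real.log_exp, Real.log_rpow hu, Real.log_rpow (by positivity),
      Real.log_div ha.ne' (Real.exp_ne_zero _), Real.log_exp]
    have hlog : Real.log (u / a) ≤ u / a - 1 := Real.log_le_sub_one_of_pos (by positivity)
    rw [Real.log_div hu.ne' ha.ne'] at hlog
    nlinarith [mul_le_mul_of_nonneg_left hlog ha.le, mul_div_cancel₀ u ha.ne']

lemma max_lemma {lam p t : ℝ} (hlam : 0 < lam) (hp : 0 < p) (ht : 0 < t) (k : ℕ) :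
    t ^ k * Real.exp (-(lam * t ^ p)) ≤ ((k:ℝ) / (lam * p * Real.exp 1)) ^ ((k:ℝ) / p) := by
  set a : ℝ := (k:ℝ) / p with haa
  have ha : 0 ≤ a := by positivity
  set u : ℝ := lam * t ^ p with huu
  have hu : 0 < u := by positivity
  have hul : u / lam = t ^ p := by rw [huu]; field_simp
  have htk : (t : ℝ) ^ k = (u / lam) ^ a := by
    rw [hul, ← Real.rpow_natCast t k, ← Real.rpow_mul ht.le, haa]
    congr 1
    field_simp
  have key : (u / lam) ^ a * Real.exp (-u) ≤ (a / (lam * Real.exp 1)) ^ a := by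
    rw [Real.div_rpow hu.le hlam.le]
    have hb2 : a / (lam * Real.exp 1) = (a / Real.exp 1) / lam := by
      rw [div_div a (Real.exp 1) lam, mul_comm lam]
    rw [hb2, Real.div_rpow (div_nonneg ha (Real.exp_nonneg 1)) hlam.le, div_mul_eq_mul_div, div_le_div_iff_of_pos_right (by positivity)]
    exact pow_mul_exp_neg_le ha hu
  have hbase : a / (lam * Real.exp 1) = (k:ℝ) / (lam * p * Real.exp 1) := by
    rw [haa, div_div]
    ring_nf
  calc t ^ k * Real.exp (-(lam * t ^ p)) = (u / lam) ^ a * Real.exp (-u) := by rw [htk]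
    _ ≤ (a / (lam * Real.exp 1)) ^ a := key
    _ = ((k:ℝ) / (lam * p * Real.exp 1)) ^ ((k:ℝ) / p) := by rw [hbase, haa]

noncomputable def Fc (lam p : ℝ) (z : ℂ) : ℂ :=
  Complex.exp (-((lam * Real.sqrt 2 : ℝ) * z ^ (-(p:ℂ))))

lemma Fc_diff (lam p : ℝ) {z : ℂ} (hz : 0 < z.re) :
    DifferentiableAt ℂ (Fc lam p) z := by
  have h1 : DifferentiableAt ℂ (fun z : ℂ => z ^ (-(p:ℂ))) z :=
    differentiableAt_id.cpow (differentiableAt_const _) (Or.inl hz)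
  exact (((h1.const_mul _).neg).cexp)

lemma sector_sq {a b x s c : ℝ} (h : (a - x)^2 + b^2 ≤ x^2 * s^2)
    (hsc : s^2 + c^2 = 1) : b^2 ≤ s^2 * (a^2 + b^2) := by
  have hid : c^2*(x^2*s^2) - c^2*((a-x)^2) = s^2*a^2 - (a - c^2*x)^2 := by
    linear_combination (c^2*x^2 - a^2) * hsc
  have h2 : c^2*b^2 ≤ s^2*a^2 - (a - c^2*x)^2 := by
    nlinarith [mul_le_mul_of_nonneg_left h (sq_nonneg c)]
  have h3 : s^2*b^2 + c^2*b^2 = b^2 := by linear_combination b^2 * hsc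
  nlinarith [sq_nonneg (a - c^2*x)]

lemma Fc_bound {lam p σ x : ℝ} (hlam : 0 < lam) (hp : 0 < p) (hx : 0 < x)
    (hσ0 : 0 < σ) (hσ4 : σ ≤ π / 4) (hpσ : p * σ ≤ π / 4)
    {z : ℂ} (hz : z ∈ Metric.closedBall (x:ℂ) (x * Real.sin σ)) :
    ‖Fc lam p z‖ ≤ Real.exp (-(lam * (2*x) ^ (-p))) := by
  set s := Real.sin σ with hs
  have hs0 : 0 < s := Real.sin_pos_of_pos_of_lt_pi hσ0 (by linarith [Real.pi_pos])
  have hs1 : s < 1 := by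
    have h1 : Real.sin σ < σ := Real.sin_lt hσ0
    have h2 : π < 3.15 := Real.pi_lt_d2
    rw [hs]; linarith
  have hd : (z.re - x)^2 + z.im^2 ≤ x^2 * s^2 := by
    have hzd : ‖z - (x:ℂ)‖ ≤ x * s := by
      simpa [Complex.dist_eq] using hz
    have h2 : (‖z - (x:ℂ)‖)^2 ≤ (x*s)^2 := by
      apply sq_le_sq' <;> nlinarith [norm_nonneg (z - (x:ℂ))]
    rw [Complex.sq_norm, Complex.normSq_apply] at h2
    simp only [Complex.sub_re, Complex.sub_im, Complex.ofReal_re, Complex.ofReal_im,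
      sub_zero] at h2
    nlinarith
  have hs2 : s^2 < 1 := by nlinarith
  have hre : 0 < z.re := by nlinarith [sq_nonneg z.im, mul_pos hx hx]
  have hz0 : z ≠ 0 := fun h => by simp [h] at hre
  have habs0 : 0 < ‖z‖ := norm_pos_iff.mpr hz0
  have habs : ‖z‖ ≤ 2 * x := by
    calc ‖z‖ = ‖(x:ℂ) + (z - x)‖ := by
          congr 1
          ring
      _ ≤ ‖(x:ℂ)‖ + ‖z - x‖ := norm_add_le _ _
      _ ≤ x + x * s := by
          rw [Complex.norm_real, Real.norm_eq_abs, abs_of_nonneg hx.le]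
          gcongr
          simpa [Complex.dist_eq] using hz
      _ ≤ 2 * x := by nlinarith
  have hsect : z.im^2 ≤ s^2 * ‖z‖^2 := by
    have habs2 : ‖z‖^2 = z.re^2 + z.im^2 := by
      rw [Complex.sq_norm, Complex.normSq_apply]; ring
    rw [habs2]
    exact sector_sq hd (by rw [hs]; exact Real.sin_sq_add_cos_sq σ)
  -- |arg z| ≤ σ
  have harglt : |z.arg| < π / 2 := Complex.abs_arg_lt_pi_div_two_iff.2 (Or.inl hre)
  have hsin_arg : |Real.sin z.arg| ≤ s := by
    rw [Complex.sin_arg, abs_div, abs_of_pos habs0, div_le_iff₀ habs0]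
    have : |z.im| ≤ s * ‖z‖ := by
      apply abs_le_of_sq_le_sq ?_ (by positivity)
      calc z.im^2 ≤ s^2 * ‖z‖^2 := hsect
        _ = (s * ‖z‖)^2 := by ring
    exact this
  have harg : |z.arg| ≤ σ := by
    by_contra hcon
    push_neg at hcon
    have h1 : Real.sin σ < Real.sin |z.arg| :=
      Real.strictMonoOn_sin ⟨by linarith [Real.pi_pos], by linarith⟩
        ⟨by linarith [abs_nonneg z.arg, Real.pi_pos], harglt.le⟩ hcon
    have h2 : Real.sin |z.arg| = |Real.sin z.arg| := by
      rcases abs_cases z.arg with ⟨he, hpos⟩ | ⟨he, hneg⟩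
      · rw [he, abs_of_nonneg]
        exact Real.sin_nonneg_of_nonneg_of_le_pi hpos (by linarith [Real.pi_pos])
      · rw [he, Real.sin_neg, abs_of_nonpos
          (Real.sin_nonpos_of_nonpos_of_neg_pi_le hneg.le (by linarith [Real.pi_pos]))]
    rw [h2] at h1
    exact absurd hsin_arg (by rw [hs]; linarith)
  -- real part of z ^ (-p)
  have hrepow : (z ^ (-(p:ℂ))).re = ‖z‖ ^ (-p) * Real.cos (p * z.arg) := by
    rw [Complex.cpow_def_of_ne_zero hz0, Complex.exp_re]
    have hre1 : (Complex.log z * (-(p:ℂ))).re = Real.log ‖z‖ * (-p) := by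
      simp [Complex.mul_re, Complex.log_re, Complex.log_im]
    have him1 : (Complex.log z * (-(p:ℂ))).im = z.arg * (-p) := by
      simp [Complex.mul_im, Complex.log_re, Complex.log_im]
    rw [hre1, him1, Real.rpow_def_of_pos habs0]
    have : Real.cos (z.arg * (-p)) = Real.cos (p * z.arg) := by
      rw [show z.arg * (-p) = -(p * z.arg) by ring, Real.cos_neg]
    rw [this]
  have hcos : Real.sqrt 2 / 2 ≤ Real.cos (p * z.arg) := by
    rw [← Real.cos_pi_div_four, ← Real.cos_abs (p * z.arg)]
    apply Real.cos_le_cos_of_nonneg_of_le_pi (abs_nonneg _) (by linarith [Real.pi_pos])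
    rw [abs_mul, abs_of_pos hp]
    calc p * |z.arg| ≤ p * σ := by gcongr
      _ ≤ π / 4 := hpσ
  have hpowle : (2*x) ^ (-p) ≤ ‖z‖ ^ (-p) := by
    exact Real.rpow_le_rpow_of_nonpos habs0 habs (by linarith)
  -- final norm bound
  have hnorm : ‖Fc lam p z‖ = Real.exp (-(lam * Real.sqrt 2 * (z ^ (-(p:ℂ))).re)) := by
    rw [Fc, Complex.norm_exp]
    congr 1
    simp [Complex.mul_re]
  rw [hnorm]
  apply Real.exp_le_exp.2
  rw [neg_le_neg_iff]
  have hsqrt2 : (0:ℝ) < Real.sqrt 2 := by positivity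
  have hsq2 : Real.sqrt 2 ^ 2 = 2 := Real.sq_sqrt (by norm_num)
  calc lam * (2*x) ^ (-p) = lam * Real.sqrt 2 * ((2*x) ^ (-p) * (Real.sqrt 2 / 2)) := by
        linear_combination (-(lam * ((2*x):ℝ) ^ (-p)) / 2) * hsq2
    _ ≤ lam * Real.sqrt 2 * (‖z‖ ^ (-p) * Real.cos (p * z.arg)) := by
        have h1 : (0:ℝ) ≤ lam * Real.sqrt 2 := by positivity
        apply mul_le_mul_of_nonneg_left _ h1
        exact mul_le_mul hpowle hcos (by positivity) (by positivity)
    _ = lam * Real.sqrt 2 * (z ^ (-(p:ℂ))).re := by rw [hrepow]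

lemma flam_eq_re (lam p : ℝ) {x : ℝ} (hx : 0 < x) :
    flam lam p x = (Fc lam p (x:ℂ)).re := by
  have h1 : ((x:ℂ)) ^ (-(p:ℂ)) = ((x ^ (-p) : ℝ) : ℂ) := by
    rw [Complex.ofReal_cpow hx.le]
    push_cast
    rfl
  rw [Fc, h1]
  rw [show -((↑(lam * Real.sqrt 2) : ℂ) * ((x ^ (-p) : ℝ) : ℂ))
      = ((-(lam * Real.sqrt 2 * x ^ (-p)) : ℝ) : ℂ) by push_cast; ring]
  rw [← Complex.ofReal_exp, Complex.ofReal_re, flam, if_neg (not_le.2 hx)]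

lemma iter_corr (lam p : ℝ) (k : ℕ) : ∀ {x : ℝ}, 0 < x →
    iteratedDeriv k (flam lam p) x = (iteratedDeriv k (Fc lam p) (x:ℂ)).re := by
  have hU : IsOpen {z : ℂ | 0 < z.re} := isOpen_lt continuous_const Complex.continuous_re
  have hFd : DifferentiableOn ℂ (Fc lam p) {z : ℂ | 0 < z.re} :=
    fun z hz => (Fc_diff lam p hz).differentiableWithinAt
  have hF : AnalyticOnNhd ℂ (Fc lam p) {z : ℂ | 0 < z.re} := hFd.analyticOnNhd hU
  induction k with
  | zero => intro x hx; simpa using flam_eq_re lam p hx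
  | succ k ih =>
    intro x hx
    rw [iteratedDeriv_succ, iteratedDeriv_succ]
    have hev : iteratedDeriv k (flam lam p) =ᶠ[nhds x]
        fun y : ℝ => (iteratedDeriv k (Fc lam p) (y:ℂ)).re := by
      filter_upwards [Ioi_mem_nhds hx] with y hy using ih hy
    rw [hev.deriv_eq]
    have hdiff : DifferentiableAt ℂ (iteratedDeriv k (Fc lam p)) (x:ℂ) := by
      rw [iteratedDeriv_eq_iterate]
      exact ((hF.iterated_deriv k) _ (by simpa using hx)).differentiableAt
    exact hdiff.hasDerivAt.real_of_complex.deriv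

/-- with α > 1, p = 1/(α−1), σ = (π/4)·min{1, 1/p}, λ > 0, for every
k ∈ ℕ and x > 0, |f_λ^{(k)}(x)| ≤ (2/sin σ)^k · (k/(λpe))^{k/p} · k!. -/
theorem stmt6 (α p σ lam : ℝ) (hα : 1 < α) (hp : p = 1 / (α - 1))
    (hσ : σ = π / 4 * min 1 (1 / p)) (hlam : 0 < lam)
    (k : ℕ) (x : ℝ) (hx : 0 < x) :
    |iteratedDeriv k (flam lam p) x| ≤
      (2 / Real.sin σ) ^ k * ((k : ℝ) / (lam * p * Real.exp 1)) ^ ((k : ℝ) / p) *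
        (Nat.factorial k : ℝ) := by
  have hp0 : 0 < p := by rw [hp]; exact div_pos one_pos (by linarith)
  have hmin : 0 < min 1 (1 / p) := lt_min one_pos (by positivity)
  have hσ0 : 0 < σ := by rw [hσ]; positivity
  have hσ4 : σ ≤ π / 4 := by
    rw [hσ]
    calc π / 4 * min 1 (1/p) ≤ π / 4 * 1 := by
          apply mul_le_mul_of_nonneg_left (min_le_left _ _) (by positivity)
      _ = π / 4 := mul_one _
  have hpσ : p * σ ≤ π / 4 := by
    rw [hσ]
    have h1 : p * min 1 (1/p) ≤ 1 := by
      calc p * min 1 (1/p) ≤ p * (1/p) :=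
            mul_le_mul_of_nonneg_left (min_le_right _ _) hp0.le
        _ = 1 := by field_simp
    calc p * (π / 4 * min 1 (1/p)) = π / 4 * (p * min 1 (1/p)) := by ring
      _ ≤ π / 4 * 1 := mul_le_mul_of_nonneg_left h1 (by positivity)
      _ = π / 4 := mul_one _
  set s := Real.sin σ with hsdef
  have hs0 : 0 < s := Real.sin_pos_of_pos_of_lt_pi hσ0 (by linarith [Real.pi_pos])
  have hs1 : s < 1 := by
    have h1 : Real.sin σ < σ := Real.sin_lt hσ0
    have h2 : π < 3.15 := Real.pi_lt_d2
    rw [hsdef]; linarith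
  set C := Real.exp (-(lam * (2*x) ^ (-p))) with hC
  set M := ((k : ℝ) / (lam * p * Real.exp 1)) ^ ((k : ℝ) / p) with hM
  have hM0 : 0 ≤ M := by rw [hM]; positivity
  -- Cauchy estimate
  have hcauchy : ‖iteratedDeriv k (Fc lam p) (x:ℂ)‖ ≤ (Nat.factorial k) * C / (x*s) ^ k := by
    apply cauchy_est (by positivity)
    · intro z hz
      apply Fc_diff
      have h5 : |z.re - x| ≤ x * s := by
        have h6 := Complex.abs_re_le_norm (z - (x:ℂ))
        simp only [Complex.sub_re, Complex.ofReal_re] at h6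
        exact h6.trans (by simpa [Complex.dist_eq] using hz)
      have h7 := abs_le.1 h5
      nlinarith [h7.1]
    · intro z hz
      exact Fc_bound hlam hp0 hx hσ0 hσ4 hpσ (Metric.sphere_subset_closedBall hz)
  -- arithmetic
  have hprod : (x*s)⁻¹ = (2*x)⁻¹ * (2/s) := by
    field_simp
  have hm := max_lemma hlam hp0 (by positivity : (0:ℝ) < (2*x)⁻¹) k
  have ht : ((2*x)⁻¹ : ℝ) ^ (p:ℝ) = (2*x) ^ (-p) := by
    rw [Real.inv_rpow (by positivity), Real.rpow_neg (by positivity)]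
  rw [ht] at hm
  have hkey : C / (x*s) ^ k ≤ (2/s) ^ k * M := by
    calc C / (x*s) ^ k = C * ((2*x)⁻¹) ^ k * (2/s) ^ k := by
          rw [div_eq_mul_inv, ← inv_pow, hprod, mul_pow, ← mul_assoc]
      _ ≤ M * (2/s) ^ k := by
          apply mul_le_mul_of_nonneg_right _ (by positivity)
          calc C * ((2*x)⁻¹) ^ k = ((2*x)⁻¹) ^ k * C := mul_comm _ _
            _ ≤ M := hm
      _ = (2/s) ^ k * M := mul_comm _ _
  calc |iteratedDeriv k (flam lam p) x|
      = |(iteratedDeriv k (Fc lam p) (x:ℂ)).re| := by rw [iter_corr lam p k hx]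
    _ ≤ ‖iteratedDeriv k (Fc lam p) (x:ℂ)‖ :=
        Complex.abs_re_le_norm _
    _ ≤ (Nat.factorial k) * C / (x*s) ^ k := hcauchy
    _ = (C / (x*s) ^ k) * (Nat.factorial k) := by ring
    _ ≤ ((2/s) ^ k * M) * (Nat.factorial k) :=
        mul_le_mul_of_nonneg_right hkey (by positivity)
    _ = (2 / Real.sin σ) ^ k * M * (Nat.factorial k) := by rw [hsdef]
end

section
/- Define a_{n+1} = ⌊exp(b q_n^β)⌋ with 0 < β < 1, b > 0, and q_{n+1} = a_{n+1} q_n + q_{n−1}, q_1 = a_1 ≥ 1, q_0 = 1. Then for all sufficiently large m, ∑_{n=0}^∞ (ln q_{n+m+1})/q_{n+m} ≤ C q_m^{β−1} for some constant C depending only on b and β. In particular the sum is finite (Brjuno condition). -/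
/-- with partial quotients a_{n+1} = ⌊exp(b q_n^β)⌋ (0 < β < 1, b > 0)
and denominators q_{n+1} = a_{n+1} q_n + q_{n−1}, for all sufficiently large m,
∑_{n=0}^∞ (ln q_{n+m+1})/q_{n+m} ≤ C q_m^{β−1} for a constant C depending only on
b and β; in particular the sum is finite (Brjuno condition). -/
theorem stmt9 (b β : ℝ) (hb : 0 < b) (hβ0 : 0 < β) (hβ1 : β < 1)
    (q : ℕ → ℕ) (hq0 : q 0 = 1) (hq1 : q 1 = ⌊Real.exp b⌋₊)
    (hrec : ∀ n, q (n + 2) = ⌊Real.exp (b * (q (n + 1) : ℝ) ^ β)⌋₊ * q (n + 1) + q n) :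
    ∃ C > 0, ∃ M : ℕ, ∀ m ≥ M,
      Summable (fun n : ℕ => Real.log (q (n + m + 1)) / (q (n + m) : ℝ)) ∧
      ∑' n : ℕ, Real.log (q (n + m + 1)) / (q (n + m) : ℝ) ≤ C * (q m : ℝ) ^ (β - 1) := by
  have hq1pos : 1 ≤ q 1 := by
    rw [hq1]
    exact Nat.le_floor (by simpa using Real.one_le_exp hb.le)
  -- every q n is at least 1
  have hq_one : ∀ n, 1 ≤ q n := by
    intro n
    induction n using Nat.twoStepInduction with
    | zero => omega
    | one => exact hq1pos
    | more n ih _ =>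
      rw [hrec]
      exact le_trans ih (Nat.le_add_left _ _)
  -- partial quotients at least 1
  have ha1 : ∀ n, 1 ≤ ⌊Real.exp (b * (q n : ℝ) ^ β)⌋₊ := by
    intro n
    refine Nat.le_floor ?_
    simpa using Real.one_le_exp (by positivity)
  -- monotonicity
  have hmono : Monotone q := by
    apply monotone_nat_of_le_succ
    intro n
    match n with
    | 0 => show q 0 ≤ q 1; omega
    | Nat.succ k =>
      rw [hrec k]
      calc q (k + 1) = 1 * q (k + 1) := (one_mul _).symm
        _ ≤ ⌊Real.exp (b * (q (k + 1) : ℝ) ^ β)⌋₊ * q (k + 1) :=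
            Nat.mul_le_mul_right _ (ha1 (k + 1))
        _ ≤ _ := Nat.le_add_right _ _
  -- unboundedness: q (2k) ≥ k + 1
  have hgrow : ∀ k, k + 1 ≤ q (2 * k) := by
    intro k
    induction k with
    | zero => norm_num [hq0]
    | succ k ih =>
      have hidx : 2 * (k + 1) = 2 * k + 2 := by ring
      rw [hidx, hrec (2 * k)]
      have h1 : 1 * 1 ≤ ⌊Real.exp (b * (q (2 * k + 1) : ℝ) ^ β)⌋₊ * q (2 * k + 1) :=
        Nat.mul_le_mul (ha1 _) (hq_one _)
      rw [one_mul] at h1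
      omega
  -- threshold: choose K with b * K^β ≥ 1
  obtain ⟨K, hK⟩ := exists_nat_ge ((1 / b) ^ (1 / β) : ℝ)
  have hKb : ∀ k, (K : ℝ) ≤ (q k : ℝ) → 1 ≤ b * (q k : ℝ) ^ β := by
    intro k hk
    have h0 : (0 : ℝ) ≤ (1 / b) ^ (1 / β) := by positivity
    have h1 : ((1 / b : ℝ) ^ (1 / β)) ^ β ≤ (q k : ℝ) ^ β :=
      Real.rpow_le_rpow h0 (le_trans hK hk) hβ0.le
    have h2 : ((1 / b : ℝ) ^ (1 / β)) ^ β = 1 / b := by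
      rw [← Real.rpow_mul (by positivity), one_div_mul_cancel hβ0.ne', Real.rpow_one]
    rw [h2] at h1
    calc (1 : ℝ) = b * (1 / b) := by field_simp
      _ ≤ b * (q k : ℝ) ^ β := by nlinarith
  -- partial quotient ≥ 2 once q k ≥ K
  have ha2 : ∀ k, (K : ℝ) ≤ (q k : ℝ) → 2 ≤ ⌊Real.exp (b * (q k : ℝ) ^ β)⌋₊ := by
    intro k hk
    refine Nat.le_floor ?_
    have h1 := hKb k hk
    have h2 : (1 : ℝ) + 1 ≤ b * (q k : ℝ) ^ β + 1 := by linarith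
    have h3 := Real.add_one_le_exp (b * (q k : ℝ) ^ β)
    push_cast
    linarith
  set M : ℕ := 2 * K + 2 with hM
  have hqM : (K : ℝ) ≤ (q M : ℝ) := by
    have := hgrow (K + 1)
    have hidx : 2 * (K + 1) = M := by omega
    rw [hidx] at this
    exact_mod_cast by omega
  -- doubling beyond M
  have hdouble : ∀ k, M ≤ k → 2 * q k ≤ q (k + 1) := by
    intro k hkM
    obtain ⟨j, rfl⟩ : ∃ j, k = j + 1 := ⟨k - 1, by omega⟩
    rw [hrec j]
    have hqk : (K : ℝ) ≤ (q (j + 1) : ℝ) := by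
      refine le_trans hqM ?_
      exact_mod_cast hmono (by omega : M ≤ j + 1)
    have := ha2 (j + 1) hqk
    calc 2 * q (j + 1) ≤ ⌊Real.exp (b * (q (j + 1) : ℝ) ^ β)⌋₊ * q (j + 1) :=
          Nat.mul_le_mul_right _ this
      _ ≤ _ := Nat.le_add_right _ _
  -- geometric growth beyond M
  have hpow : ∀ m, M ≤ m → ∀ n, 2 ^ n * q m ≤ q (n + m) := by
    intro m hm n
    induction n with
    | zero => simp
    | succ n ih =>
      calc 2 ^ (n + 1) * q m = 2 * (2 ^ n * q m) := by ring
        _ ≤ 2 * q (n + m) := by omega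
        _ ≤ q (n + m + 1) := hdouble (n + m) (by omega)
        _ = q (n + 1 + m) := by ring_nf
  -- logarithmic bound
  set C' : ℝ := b + 1 + 1 / β with hC'
  have hC'pos : 0 < C' := by positivity
  have hlog : ∀ k, 1 ≤ k → Real.log (q (k + 1)) ≤ C' * (q k : ℝ) ^ β := by
    intro k hk
    obtain ⟨j, rfl⟩ : ∃ j, k = j + 1 := ⟨k - 1, by omega⟩
    set x : ℝ := b * (q (j + 1) : ℝ) ^ β with hx
    have hq1r : (1 : ℝ) ≤ (q (j + 1) : ℝ) := by exact_mod_cast hq_one (j + 1)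
    have hqpos : (0 : ℝ) < (q (j + 1) : ℝ) := by linarith
    have hxpos : 0 < x := by rw [hx]; exact mul_pos hb (Real.rpow_pos_of_pos hqpos _)
    have hfl : (⌊Real.exp x⌋₊ : ℝ) ≤ Real.exp x := Nat.floor_le (Real.exp_pos x).le
    have hmr : (q j : ℝ) ≤ (q (j + 1) : ℝ) := by exact_mod_cast hmono (by omega : j ≤ j + 1)
    have hle : (q (j + 2) : ℝ) ≤ 2 * Real.exp x * (q (j + 1) : ℝ) := by
      rw [hrec j]
      push_cast
      have h1 : (1 : ℝ) ≤ Real.exp x := Real.one_le_exp hxpos.le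
      nlinarith
    have hlogle : Real.log (q (j + 2)) ≤ Real.log (2 * Real.exp x * (q (j + 1) : ℝ)) := by
      apply Real.log_le_log (by exact_mod_cast hq_one (j + 2)) hle
    have hexpand : Real.log (2 * Real.exp x * (q (j + 1) : ℝ))
        = Real.log 2 + x + Real.log (q (j + 1)) := by
      rw [Real.log_mul (by positivity) hqpos.ne', Real.log_mul (by norm_num)
        (Real.exp_pos x).ne', Real.log_exp]
    have hlog2 : Real.log 2 ≤ 1 := by linarith [Real.log_le_sub_one_of_pos (by norm_num : (0:ℝ) < 2)]
    have hone : (1 : ℝ) ≤ (q (j + 1) : ℝ) ^ β := Real.one_le_rpow hq1r hβ0.le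
    have hlogq : Real.log (q (j + 1)) ≤ (1 / β) * (q (j + 1) : ℝ) ^ β := by
      have h1 : Real.log ((q (j + 1) : ℝ) ^ β) ≤ (q (j + 1) : ℝ) ^ β - 1 :=
        Real.log_le_sub_one_of_pos (by positivity)
      rw [Real.log_rpow hqpos] at h1
      rw [div_mul_eq_mul_div, le_div_iff₀ hβ0, mul_comm]
      linarith
    calc Real.log (q (j + 1 + 1)) ≤ Real.log 2 + x + Real.log (q (j + 1)) := by
          rw [← hexpand]; exact hlogle
      _ ≤ 1 + b * (q (j + 1) : ℝ) ^ β + (1 / β) * (q (j + 1) : ℝ) ^ β := by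
          rw [hx]; linarith
      _ ≤ C' * (q (j + 1) : ℝ) ^ β := by rw [hC']; nlinarith
  -- the geometric ratio
  set r : ℝ := (2 : ℝ) ^ (β - 1) with hr
  have hr0 : 0 < r := Real.rpow_pos_of_pos (by norm_num) _
  have hr1 : r < 1 := Real.rpow_lt_one_of_one_lt_of_neg (by norm_num) (by linarith)
  refine ⟨C' * (1 - r)⁻¹, mul_pos hC'pos (inv_pos.mpr (by linarith)), M, fun m hm => ?_⟩
  have hqm1 : (1 : ℝ) ≤ (q m : ℝ) := by exact_mod_cast hq_one m
  have hqmpos : (0 : ℝ) < (q m : ℝ) := by linarith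
  -- termwise bound
  have hterm : ∀ n : ℕ, Real.log (q (n + m + 1)) / (q (n + m) : ℝ)
      ≤ (C' * (q m : ℝ) ^ (β - 1)) * r ^ n := by
    intro n
    have hk1 : 1 ≤ n + m := by omega
    have hqkpos : (0 : ℝ) < (q (n + m) : ℝ) := by exact_mod_cast hq_one (n + m)
    have h1 : Real.log (q (n + m + 1)) / (q (n + m) : ℝ)
        ≤ C' * (q (n + m) : ℝ) ^ β / (q (n + m) : ℝ) :=
      by gcongr; exact hlog (n + m) hk1
    have h2 : C' * (q (n + m) : ℝ) ^ β / (q (n + m) : ℝ)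
        = C' * (q (n + m) : ℝ) ^ (β - 1) := by
      rw [Real.rpow_sub_one hqkpos.ne']
      ring
    have h3 : (q (n + m) : ℝ) ^ (β - 1) ≤ ((2 : ℝ) ^ n * (q m : ℝ)) ^ (β - 1) := by
      apply Real.rpow_le_rpow_of_nonpos (mul_pos (by positivity) hqmpos) ?_ (by linarith)
      have h := hpow m hm n
      calc ((2 : ℝ) ^ n * (q m : ℝ)) = ((2 ^ n * q m : ℕ) : ℝ) := by push_cast; ring
        _ ≤ (q (n + m) : ℝ) := by exact_mod_cast h
    have h4 : ((2 : ℝ) ^ n * (q m : ℝ)) ^ (β - 1) = r ^ n * (q m : ℝ) ^ (β - 1) := by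
      rw [Real.mul_rpow (by positivity) (by positivity)]
      congr 1
      rw [hr, ← Real.rpow_natCast (2 : ℝ) n, ← Real.rpow_natCast ((2:ℝ) ^ (β - 1)) n,
        ← Real.rpow_mul (by norm_num), ← Real.rpow_mul (by norm_num), mul_comm]
    calc Real.log (q (n + m + 1)) / (q (n + m) : ℝ)
        ≤ C' * (q (n + m) : ℝ) ^ (β - 1) := by rw [← h2]; exact h1
      _ ≤ C' * (r ^ n * (q m : ℝ) ^ (β - 1)) := by
          apply mul_le_mul_of_nonneg_left ?_ hC'pos.le
          rw [← h4]; exact h3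
      _ = (C' * (q m : ℝ) ^ (β - 1)) * r ^ n := by ring
  have hnonneg : ∀ n : ℕ, 0 ≤ Real.log (q (n + m + 1)) / (q (n + m) : ℝ) := by
    intro n
    apply div_nonneg (Real.log_nonneg (by exact_mod_cast hq_one (n + m + 1)))
      (by positivity)
  have hgs : Summable (fun n : ℕ => (C' * (q m : ℝ) ^ (β - 1)) * r ^ n) :=
    (summable_geometric_of_lt_one hr0.le hr1).mul_left _
  have hsum : Summable (fun n : ℕ => Real.log (q (n + m + 1)) / (q (n + m) : ℝ)) :=
    Summable.of_nonneg_of_le hnonneg hterm hgs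
  refine ⟨hsum, ?_⟩
  calc ∑' n : ℕ, Real.log (q (n + m + 1)) / (q (n + m) : ℝ)
      ≤ ∑' n : ℕ, (C' * (q m : ℝ) ^ (β - 1)) * r ^ n := Summable.tsum_le_tsum hterm hsum hgs
    _ = (C' * (q m : ℝ) ^ (β - 1)) * (1 - r)⁻¹ := by
        rw [tsum_mul_left, tsum_geometric_of_lt_one hr0.le hr1]
    _ = C' * (1 - r)⁻¹ * (q m : ℝ) ^ (β - 1) := by ring
end

section
/- With a_{n+1} = ⌊exp(b q_n^β)⌋ (b > 0, 0 < β < 1) and q_{n+1} = a_{n+1} q_n + q_{n−1}, the series ∑_{n=0}^∞ (ln q_{n+1})/q_n^β diverges. Hence the number ω with these partial quotients is a Brjuno number that is not an α-Brjuno–Rüssmann number for α = 1/β. -/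
/-- with a_{n+1} = ⌊exp(b q_n^β)⌋ (b > 0, 0 < β < 1) and
q_{n+1} = a_{n+1} q_n + q_{n−1}, the series ∑ (ln q_{n+1})/q_n^β diverges; hence the
number with these partial quotients is a Brjuno number (cf. STATEMENT 9) that is not
an α-Brjuno–Rüssmann number for α = 1/β. -/
theorem stmt10 (b β : ℝ) (hb : 0 < b) (hβ0 : 0 < β) (hβ1 : β < 1)
    (q : ℕ → ℕ) (hq0 : q 0 = 1) (hq1 : q 1 = ⌊Real.exp b⌋₊)
    (hrec : ∀ n, q (n + 2) = ⌊Real.exp (b * (q (n + 1) : ℝ) ^ β)⌋₊ * q (n + 1) + q n) :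
    ¬ Summable (fun n : ℕ => Real.log (q (n + 1)) / (q n : ℝ) ^ β) := by
  have hq1pos : 1 ≤ q 1 := by
    rw [hq1]
    exact Nat.le_floor (by exact_mod_cast Real.one_le_exp hb.le)
  -- every q n is ≥ 1
  have hpos : ∀ n, 1 ≤ q n := by
    have h : ∀ n, 1 ≤ q n ∧ 1 ≤ q (n + 1) := by
      intro n
      induction n with
      | zero => exact ⟨by simp [hq0], hq1pos⟩
      | succ k ih =>
        refine ⟨ih.2, ?_⟩
        rw [hrec k]
        have := ih.1
        omega
    exact fun n => (h n).1
  -- the floor of the exponential is ≥ 1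
  have ha : ∀ n, 1 ≤ ⌊Real.exp (b * (q (n + 1) : ℝ) ^ β)⌋₊ := by
    intro n
    refine Nat.le_floor ?_
    have : (0:ℝ) ≤ b * (q (n + 1) : ℝ) ^ β := by positivity
    exact_mod_cast Real.one_le_exp this
  -- q is monotone
  have hmono : Monotone q := by
    apply monotone_nat_of_le_succ
    intro n
    match n with
    | 0 => rw [hq0]; exact hq1pos
    | Nat.succ k =>
      show q (k + 1) ≤ q (k + 2)
      rw [hrec k]
      have h1 := ha k
      have h2 := hpos k
      have h3 := Nat.le_mul_of_pos_left (q (k + 1)) (h1)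
      omega
  -- growth: q (2k) ≥ k + 1
  have hgrow : ∀ k, k + 1 ≤ q (2 * k) := by
    intro k
    induction k with
    | zero => simp [hq0]
    | succ m ih =>
      have hr := hrec (2 * m)
      have h1 := Nat.mul_le_mul (ha (2 * m)) (hpos (2 * m + 1))
      have : q (2 * (m + 1)) = q (2 * m + 2) := by ring_nf
      omega
  intro hS
  have htend := hS.tendsto_atTop_zero
  rw [Metric.tendsto_atTop] at htend
  obtain ⟨N, hN⟩ := htend (b / 2) (by linarith)
  set C : ℝ := (2 * Real.log 2 / b) ^ (1 / β) with hCdef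
  have hlog2 : (0:ℝ) < Real.log 2 := Real.log_pos (by norm_num)
  have hC0 : 0 ≤ C := by
    apply Real.rpow_nonneg
    positivity
  set K : ℕ := ⌈C⌉₊ with hKdef
  set n : ℕ := max N (2 * (K + 1)) with hndef
  -- q (n+1) is large
  have hqn : (K : ℕ) + 2 ≤ q (n + 1) := by
    have h1 : K + 2 ≤ q (2 * (K + 1)) := hgrow (K + 1)
    have h2 : 2 * (K + 1) ≤ n + 1 := le_trans (le_max_right _ _) (Nat.le_succ n)
    exact le_trans h1 (hmono h2)
  have hqr : C ≤ (q (n + 1) : ℝ) := by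
    have h1 : C ≤ (K : ℝ) := Nat.le_ceil C
    have h2 : (K : ℝ) ≤ (q (n + 1) : ℝ) := by exact_mod_cast le_trans (Nat.le_add_right K 2) hqn
    linarith
  have hqr0 : (0:ℝ) < (q (n + 1) : ℝ) := by
    have := hpos (n + 1)
    exact_mod_cast Nat.lt_of_lt_of_le Nat.zero_lt_one this
  -- (q (n+1))^β ≥ 2 log 2 / b
  have hpowC : C ^ β = 2 * Real.log 2 / b := by
    rw [hCdef, one_div]
    exact Real.rpow_inv_rpow (by positivity) hβ0.ne'
  have hpow : 2 * Real.log 2 / b ≤ (q (n + 1) : ℝ) ^ β := by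
    rw [← hpowC]
    exact Real.rpow_le_rpow hC0 hqr hβ0.le
  have hpowpos : (0:ℝ) < (q (n + 1) : ℝ) ^ β := Real.rpow_pos_of_pos hqr0 β
  set x : ℝ := b * (q (n + 1) : ℝ) ^ β with hxdef
  have hxlog2 : Real.log 2 ≤ x := by
    have h1 : 2 * Real.log 2 ≤ x := by
      rw [hxdef]
      calc 2 * Real.log 2 = b * (2 * Real.log 2 / b) := by field_simp
        _ ≤ b * (q (n + 1) : ℝ) ^ β := by
            exact mul_le_mul_of_nonneg_left hpow hb.le
    linarith
  have hexp2 : (2:ℝ) ≤ Real.exp x := by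
    calc (2:ℝ) = Real.exp (Real.log 2) := (Real.exp_log (by norm_num)).symm
      _ ≤ Real.exp x := Real.exp_le_exp.mpr hxlog2
  -- q (n+2) ≥ floor (exp x) ≥ exp x / 2
  have hq2 : Real.exp x / 2 ≤ (q (n + 2) : ℝ) := by
    have h1 : ⌊Real.exp x⌋₊ ≤ q (n + 2) := by
      rw [hrec n]
      have h2 := Nat.le_mul_of_pos_left (q (n+1)) (Nat.lt_of_lt_of_le Nat.zero_lt_one (ha n))
      calc ⌊Real.exp x⌋₊ ≤ ⌊Real.exp x⌋₊ * q (n + 1) :=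
            Nat.le_mul_of_pos_right _ (hpos (n+1))
        _ ≤ ⌊Real.exp x⌋₊ * q (n + 1) + q n := Nat.le_add_right _ _
    have h3 : Real.exp x - 1 < (⌊Real.exp x⌋₊ : ℝ) := by
      have := Nat.sub_one_lt_floor (Real.exp x)
      linarith
    have h4 : Real.exp x / 2 ≤ Real.exp x - 1 := by linarith
    have h5 : (⌊Real.exp x⌋₊ : ℝ) ≤ (q (n + 2) : ℝ) := by exact_mod_cast h1
    linarith
  -- log bound
  have hlogq : x - Real.log 2 ≤ Real.log (q (n + 2)) := by
    have h1 : Real.log (Real.exp x / 2) ≤ Real.log (q (n + 2)) := by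
      apply Real.log_le_log (by positivity) hq2
    rwa [Real.log_div (Real.exp_ne_zero x) (by norm_num), Real.log_exp] at h1
  -- the term at index n+1 is ≥ b/2
  have hterm : b / 2 ≤ Real.log (q (n + 2)) / (q (n + 1) : ℝ) ^ β := by
    have hA : (x - Real.log 2) / (q (n + 1) : ℝ) ^ β
        ≤ Real.log (q (n + 2)) / (q (n + 1) : ℝ) ^ β := by gcongr
    have hB : (x - Real.log 2) / (q (n + 1) : ℝ) ^ β
        = b - Real.log 2 / (q (n + 1) : ℝ) ^ β := by
      rw [hxdef]; field_simp
    have hD : (0:ℝ) < 2 * Real.log 2 / b := by positivity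
    have hC2 : Real.log 2 / (q (n + 1) : ℝ) ^ β ≤ b / 2 := by
      have h1 : Real.log 2 / (q (n + 1) : ℝ) ^ β
          ≤ Real.log 2 / (2 * Real.log 2 / b) :=
        div_le_div_of_nonneg_left hlog2.le hD hpow
      have h2 : Real.log 2 / (2 * Real.log 2 / b) = b / 2 := by
        field_simp
      linarith
    linarith
  have hnN : N ≤ n + 1 := le_trans (le_max_left N _) (Nat.le_succ n)
  have hfin := hN (n + 1) hnN
  rw [Real.dist_eq, sub_zero] at hfin
  have habs := le_abs_self (Real.log (q (n + 1 + 1)) / (q (n + 1) : ℝ) ^ β)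
  have : n + 1 + 1 = n + 2 := rfl
  rw [this] at habs
  linarith
end

section
/- Let u_m(x) = δ(1 − cos 2πx) with δ = Δ² > 0, and let (x_i) be a minimal and stationary configuration for h(x,x') = (1/2)(x−x')² + u_m(x') with x_{i−1} < x_i < x_{i+1}. If x_i ∈ [1/4, 3/4], then x_{i+1} − x_i ≥ Δ/2. -/
open Real

def IsMinimalConfig (h : ℝ → ℝ → ℝ) (x : ℤ → ℝ) : Prop :=
  ∀ i j : ℤ, i < j → ∀ z : ℤ → ℝ, z i = x i → z j = x j →
    ∑ s ∈ Finset.Ico i j, h (x s) (x (s + 1)) ≤ ∑ s ∈ Finset.Ico i j, h (z s) (z (s + 1))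

lemma Ico_bot_split (a b : ℤ) (f : ℤ → ℝ) (hab : a < b) :
    ∑ s ∈ Finset.Ico a b, f s = f a + ∑ s ∈ Finset.Ico (a+1) b, f s := by
  have h1 : Finset.Ico a b = insert a (Finset.Ico (a+1) b) := by
    ext t; simp only [Finset.mem_Ico, Finset.mem_insert]; omega
  rw [h1, Finset.sum_insert (by simp)]

lemma Ico_top_split (a b : ℤ) (f : ℤ → ℝ) (hab : a ≤ b) :
    ∑ s ∈ Finset.Ico a (b+1), f s = (∑ s ∈ Finset.Ico a b, f s) + f b := by
  have h1 : Finset.Ico a (b+1) = insert b (Finset.Ico a b) := by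
    ext t; simp only [Finset.mem_Ico, Finset.mem_insert]; omega
  rw [h1, Finset.sum_insert (by simp), add_comm]

lemma Ico_shift (a b : ℤ) (f : ℤ → ℝ) :
    ∑ s ∈ Finset.Ico a b, f (s+1) = ∑ s ∈ Finset.Ico (a+1) (b+1), f s := by
  rw [← Finset.map_add_right_Ico a b 1, Finset.sum_map]
  simp [addRightEmbedding]

lemma Ico_concat (a b c : ℤ) (f : ℤ → ℝ) (hab : a ≤ b) (hbc : b ≤ c) :
    ((∑ s ∈ Finset.Ico a b, f s) + ∑ s ∈ Finset.Ico b c, f s) = ∑ s ∈ Finset.Ico a c, f s := by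
  rw [← Finset.sum_union (by
    simp only [Finset.disjoint_left, Finset.mem_Ico]
    intro t ht1 ht2; omega)]
  rw [Finset.Ico_union_Ico_eq_Ico hab hbc]

/-- Deleting one interior point and duplicating the right endpoint. -/
lemma gap_lemma (V : ℝ → ℝ) (x : ℤ → ℝ)
    (hmin : IsMinimalConfig (fun a b => 1/2*(a-b)^2 + V b) x)
    (i j : ℤ) (hij : i + 1 ≤ j) :
    V (x i) ≤ (x i - x (i-1)) * (x (i+1) - x i) + V (x j) := by
  obtain ⟨j', rfl⟩ : ∃ j', j = j' + 1 := ⟨j - 1, by ring⟩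
  have hij' : i ≤ j' := by omega
  classical
  set z : ℤ → ℝ := fun s => if i ≤ s ∧ s + 1 ≤ j' + 1 then x (s+1) else x s with hzdef
  have hz1 : z (i-1) = x (i-1) := by
    simp only [hzdef]; rw [if_neg (by omega)]
  have hz2 : z (j'+1) = x (j'+1) := by
    simp only [hzdef]; rw [if_neg (by omega)]
  have key := hmin (i-1) (j'+1) (by omega) z hz1 hz2
  simp only [] at key
  have ex : ∑ s ∈ Finset.Ico (i-1) (j'+1), (1/2*(x s - x (s+1))^2 + V (x (s+1)))
      = (1/2*(x (i-1) - x i)^2 + V (x i)) + (1/2*(x i - x (i+1))^2 + V (x (i+1)))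
        + ∑ s ∈ Finset.Ico (i+1) (j'+1), (1/2*(x s - x (s+1))^2 + V (x (s+1))) := by
    rw [Ico_bot_split (i-1) (j'+1) _ (by omega)]
    simp only [show i - 1 + 1 = i from by omega]
    rw [Ico_bot_split i (j'+1) _ (by omega)]
    ring
  have ez : ∑ s ∈ Finset.Ico (i-1) (j'+1), (1/2*(z s - z (s+1))^2 + V (z (s+1)))
      = (1/2*(x (i-1) - x (i+1))^2 + V (x (i+1)))
        + (∑ s ∈ Finset.Ico (i+1) (j'+1), (1/2*(x s - x (s+1))^2 + V (x (s+1))))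
        + (1/2*(x (j'+1) - x (j'+1))^2 + V (x (j'+1))) := by
    rw [Ico_bot_split (i-1) (j'+1) _ (by omega)]
    simp only [show i - 1 + 1 = i from by omega]
    rw [Ico_top_split i j' _ (by omega)]
    have e1 : z (i-1) = x (i-1) := hz1
    have e2 : z i = x (i+1) := by
      simp only [hzdef]; rw [if_pos (by omega)]
    have e3 : z j' = x (j'+1) := by
      simp only [hzdef]; rw [if_pos (by omega)]
    have e4 : z (j'+1) = x (j'+1) := hz2
    have emid : ∑ s ∈ Finset.Ico i j', (1/2*(z s - z (s+1))^2 + V (z (s+1)))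
        = ∑ s ∈ Finset.Ico (i+1) (j'+1), (1/2*(x s - x (s+1))^2 + V (x (s+1))) := by
      rw [← Ico_shift i j' (fun s => 1/2*(x s - x (s+1))^2 + V (x (s+1)))]
      refine Finset.sum_congr rfl (fun s hs => ?_)
      simp only [Finset.mem_Ico] at hs
      have f1 : z s = x (s+1) := by
        simp only [hzdef]; rw [if_pos (by omega)]
      have f2 : z (s+1) = x (s+1+1) := by
        simp only [hzdef]; rw [if_pos (by omega)]
      rw [f1, f2]
    rw [e1, e2, e3, e4, emid]
    ring
  rw [ex, ez] at key
  nlinarith [key]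

/-- Deleting the point `x i` (shifting left) and inserting a new point `n` in the bond
`(x m, x (m+1))`, for `m ≥ i+1`. -/
lemma ins_lemma (V : ℝ → ℝ) (x : ℤ → ℝ)
    (hmin : IsMinimalConfig (fun a b => 1/2*(a-b)^2 + V b) x)
    (i m : ℤ) (him : i + 1 ≤ m) (n : ℝ) :
    V (x i) ≤ (x i - x (i-1)) * (x (i+1) - x i) + V n - (n - x m) * (x (m+1) - n) := by
  obtain ⟨m', rfl⟩ : ∃ m', m = m' + 1 := ⟨m - 1, by ring⟩
  have him' : i ≤ m' := by omega
  classical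
  set z : ℤ → ℝ := fun s => if i ≤ s ∧ s ≤ m' then x (s+1) else if s = m'+1 then n else x s
    with hzdef
  have hz1 : z (i-1) = x (i-1) := by
    simp only [hzdef]; rw [if_neg (by omega), if_neg (by omega)]
  have hz2 : z (m'+1+1) = x (m'+1+1) := by
    simp only [hzdef]; rw [if_neg (by omega), if_neg (by omega)]
  have key := hmin (i-1) (m'+1+1) (by omega) z hz1 hz2
  simp only [] at key
  have ex : ∑ s ∈ Finset.Ico (i-1) (m'+1+1), (1/2*(x s - x (s+1))^2 + V (x (s+1)))
      = (1/2*(x (i-1) - x i)^2 + V (x i)) + (1/2*(x i - x (i+1))^2 + V (x (i+1)))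
        + (∑ s ∈ Finset.Ico (i+1) (m'+1), (1/2*(x s - x (s+1))^2 + V (x (s+1))))
        + (1/2*(x (m'+1) - x (m'+1+1))^2 + V (x (m'+1+1))) := by
    rw [Ico_bot_split (i-1) (m'+1+1) _ (by omega)]
    simp only [show i - 1 + 1 = i from by omega]
    rw [Ico_bot_split i (m'+1+1) _ (by omega)]
    rw [Ico_top_split (i+1) (m'+1) _ (by omega)]
    ring
  have ez : ∑ s ∈ Finset.Ico (i-1) (m'+1+1), (1/2*(z s - z (s+1))^2 + V (z (s+1)))
      = (1/2*(x (i-1) - x (i+1))^2 + V (x (i+1)))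
        + (∑ s ∈ Finset.Ico (i+1) (m'+1), (1/2*(x s - x (s+1))^2 + V (x (s+1))))
        + (1/2*(x (m'+1) - n)^2 + V n)
        + (1/2*(n - x (m'+1+1))^2 + V (x (m'+1+1))) := by
    rw [Ico_bot_split (i-1) (m'+1+1) _ (by omega)]
    simp only [show i - 1 + 1 = i from by omega]
    rw [Ico_top_split i (m'+1) _ (by omega)]
    rw [Ico_top_split i m' _ (by omega)]
    have e2 : z i = x (i+1) := by
      simp only [hzdef]; rw [if_pos (by omega)]
    have e3 : z m' = x (m'+1) := by
      simp only [hzdef]; rw [if_pos (by omega)]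
    have e4 : z (m'+1) = n := by
      simp only [hzdef]; rw [if_neg (by omega)]; simp
    have emid : ∑ s ∈ Finset.Ico i m', (1/2*(z s - z (s+1))^2 + V (z (s+1)))
        = ∑ s ∈ Finset.Ico (i+1) (m'+1), (1/2*(x s - x (s+1))^2 + V (x (s+1))) := by
      rw [← Ico_shift i m' (fun s => 1/2*(x s - x (s+1))^2 + V (x (s+1)))]
      refine Finset.sum_congr rfl (fun s hs => ?_)
      simp only [Finset.mem_Ico] at hs
      have f1 : z s = x (s+1) := by
        simp only [hzdef]; rw [if_pos (by omega)]
      have f2 : z (s+1) = x (s+1+1) := by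
        simp only [hzdef]; rw [if_pos (by omega)]
      rw [f1, f2]
    rw [hz1, hz2, e2, e3, e4, emid]
    ring
  rw [ex, ez] at key
  nlinarith [key]


set_option maxHeartbeats 1000000 in
/-- If the forward orbit of a minimal configuration is trapped in `(0,1)` while paying
potential at least `Δ²/4` at every site, we get a contradiction with a competitor that
dives to the bottom of the well, rests there, and comes back. -/
lemma dive_lemma (Δ : ℝ) (hΔ0 : 0 < Δ) (hΔ6 : Δ ≤ 1/6) (V : ℝ → ℝ)
    (hV0 : V 0 = 0) (hVub : ∀ y : ℝ, V y ≤ 2*Δ^2)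
    (x : ℤ → ℝ) (hmin : IsMinimalConfig (fun a b => 1/2*(a-b)^2 + V b) x) (i : ℤ)
    (havoid : ∀ j : ℤ, i+1 ≤ j → Δ^2/4 < V (x j))
    (htrap : ∀ m : ℤ, i ≤ m → 0 < x m ∧ x m < 1) : False := by
  classical
  obtain ⟨M, hM1, hM2⟩ : ∃ M : ℕ, 1/Δ ≤ (M:ℝ) ∧ (M:ℝ) ≤ 1/Δ + 1 :=
    ⟨⌈1/Δ⌉₊, Nat.le_ceil _, (Nat.ceil_lt_add_one (by positivity)).le⟩
  obtain ⟨N, hN1⟩ : ∃ N : ℕ, 24/Δ ≤ (N:ℝ) := ⟨⌈24/Δ⌉₊, Nat.le_ceil _⟩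
  have hMr : (0:ℝ) < (M:ℝ) := lt_of_lt_of_le (by positivity) hM1
  have hMne : (M:ℝ) ≠ 0 := ne_of_gt hMr
  have hinv6 : (6:ℝ) ≤ 1/Δ := by rw [le_div_iff₀ hΔ0]; linarith
  have h2MN : 2*(M:ℝ) ≤ (N:ℝ) := by
    have e : (24:ℝ)/Δ = 24*(1/Δ) := by ring
    have hN1' : 24*(1/Δ) ≤ (N:ℝ) := by rw [← e]; exact hN1
    linarith
  have hMzpos : 0 < (M:ℤ) := by exact_mod_cast (by exact_mod_cast hMr : 0 < M)
  have h2MNz : 2*(M:ℤ) ≤ (N:ℤ) := by exact_mod_cast (by exact_mod_cast h2MN : 2*M ≤ N)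
  set Mz : ℤ := (M:ℤ) with hMzdef
  set Nz : ℤ := (N:ℤ) with hNzdef
  have hxi := htrap i le_rfl
  set z : ℤ → ℝ := fun s =>
    if s ≤ i + Mz then (1 - ((s - i : ℤ):ℝ)/(M:ℝ)) * x i
    else if s ≤ i + Nz - Mz then 0
    else (((s - (i + Nz - Mz) : ℤ):ℝ)/(M:ℝ)) * x (i + Nz) with hzdef
  have hzi : z i = x i := by
    simp only [hzdef]
    rw [if_pos (by omega)]
    norm_num
  have hzN : z (i + Nz) = x (i + Nz) := by
    simp only [hzdef]
    rw [if_neg (by omega), if_neg (by omega)]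
    rw [show (i + Nz - (i + Nz - Mz) : ℤ) = Mz from by ring]
    rw [hMzdef]
    push_cast
    rw [div_self hMne, one_mul]
  have key := hmin i (i + Nz) (by omega) z hzi hzN
  simp only [] at key
  -- lower bound for the x-sum
  have hxlow : (N:ℝ) * (Δ^2/4) ≤
      ∑ s ∈ Finset.Ico i (i + Nz), (1/2*(x s - x (s+1))^2 + V (x (s+1))) := by
    have hcard : (Finset.Ico i (i + Nz)).card = N := by
      rw [Int.card_Ico]; omega
    have := Finset.card_nsmul_le_sum (Finset.Ico i (i + Nz))
      (fun s => 1/2*(x s - x (s+1))^2 + V (x (s+1))) (Δ^2/4) (by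
        intro s hs
        simp only [Finset.mem_Ico] at hs
        have := havoid (s+1) (by omega)
        nlinarith [sq_nonneg (x s - x (s+1))])
    rw [hcard, nsmul_eq_mul] at this
    exact this
  -- values of z in the three zones
  have hz0 : ∀ s : ℤ, i + Mz ≤ s → s ≤ i + Nz - Mz → z s = 0 := by
    intro s hs1 hs2
    simp only [hzdef]
    by_cases hA : s ≤ i + Mz
    · rw [if_pos hA]
      have : s = i + Mz := le_antisymm hA hs1
      rw [this, show (i + Mz - i : ℤ) = Mz from by ring, hMzdef]
      push_cast
      rw [div_self hMne]
      ring
    · rw [if_neg hA, if_pos hs2]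
  have hz3 : ∀ s : ℤ, i + Nz - Mz ≤ s →
      z s = (((s - (i + Nz - Mz) : ℤ):ℝ)/(M:ℝ)) * x (i + Nz) := by
    intro s hs1
    simp only [hzdef]
    by_cases hA : s ≤ i + Mz
    · rw [if_pos hA]
      rw [show (s - (i + Nz - Mz) : ℤ) = 0 from by omega,
        show (s - i : ℤ) = Mz from by omega, hMzdef]
      push_cast
      rw [div_self hMne]
      ring
    · by_cases hB : s ≤ i + Nz - Mz
      · rw [if_neg hA, if_pos hB]
        have he2 : (s - (i + Nz - Mz) : ℤ) = 0 := by omega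
        rw [he2]
        push_cast
        ring
      · rw [if_neg hA, if_neg hB]
  -- upper bound for the z-sum
  have hzup : ∑ s ∈ Finset.Ico i (i + Nz), (1/2*(z s - z (s+1))^2 + V (z (s+1)))
      ≤ 1/(M:ℝ) + 4*(M:ℝ)*Δ^2 := by
    have hsplit1 := Ico_concat i (i + Mz) (i + Nz)
      (fun s => 1/2*(z s - z (s+1))^2 + V (z (s+1))) (by omega) (by omega)
    have hsplit2 := Ico_concat (i + Mz) (i + Nz - Mz) (i + Nz)
      (fun s => 1/2*(z s - z (s+1))^2 + V (z (s+1))) (by omega) (by omega)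
    rw [← hsplit1, ← hsplit2]
    have hzone1 : ∑ s ∈ Finset.Ico i (i + Mz), (1/2*(z s - z (s+1))^2 + V (z (s+1)))
        ≤ (M:ℝ) * (1/2*(1/(M:ℝ)^2) + 2*Δ^2) := by
      have hcard : (Finset.Ico i (i + Mz)).card = M := by
        rw [Int.card_Ico]; omega
      have := Finset.sum_le_card_nsmul (Finset.Ico i (i + Mz))
        (fun s => 1/2*(z s - z (s+1))^2 + V (z (s+1))) (1/2*(1/(M:ℝ)^2) + 2*Δ^2) (by
          intro s hs
          simp only [Finset.mem_Ico] at hs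
          have hv1 : z s = (1 - ((s - i : ℤ):ℝ)/(M:ℝ)) * x i := by
            simp only [hzdef]; rw [if_pos (by omega)]
          have hv2 : z (s+1) = (1 - ((s + 1 - i : ℤ):ℝ)/(M:ℝ)) * x i := by
            simp only [hzdef]; rw [if_pos (by omega)]
          have hdiff : z s - z (s+1) = x i / (M:ℝ) := by
            rw [hv1, hv2]
            have : ((s + 1 - i : ℤ):ℝ) = ((s - i : ℤ):ℝ) + 1 := by push_cast; ring
            rw [this]; field_simp; ring
          have hsq : (z s - z (s+1))^2 ≤ 1/(M:ℝ)^2 := by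
            rw [hdiff, div_pow]
            apply div_le_div_of_nonneg_right ?_ (by positivity)
            · nlinarith [hxi.1, hxi.2]
          have := hVub (z (s+1))
          linarith)
      rw [hcard, nsmul_eq_mul] at this
      linarith
    have hzone2 : ∑ s ∈ Finset.Ico (i + Mz) (i + Nz - Mz),
        (1/2*(z s - z (s+1))^2 + V (z (s+1))) = 0 := by
      apply Finset.sum_eq_zero
      intro s hs
      simp only [Finset.mem_Ico] at hs
      rw [hz0 s (by omega) (by omega), hz0 (s+1) (by omega) (by omega), hV0]
      ring
    have hzone3 : ∑ s ∈ Finset.Ico (i + Nz - Mz) (i + Nz),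
        (1/2*(z s - z (s+1))^2 + V (z (s+1))) ≤ (M:ℝ) * (1/2*(1/(M:ℝ)^2) + 2*Δ^2) := by
      have hcard : (Finset.Ico (i + Nz - Mz) (i + Nz)).card = M := by
        rw [Int.card_Ico]; omega
      have hxN := htrap (i + Nz) (by omega)
      have := Finset.sum_le_card_nsmul (Finset.Ico (i + Nz - Mz) (i + Nz))
        (fun s => 1/2*(z s - z (s+1))^2 + V (z (s+1))) (1/2*(1/(M:ℝ)^2) + 2*Δ^2) (by
          intro s hs
          simp only [Finset.mem_Ico] at hs
          have hv1 := hz3 s (by omega)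
          have hv2 := hz3 (s+1) (by omega)
          have hdiff : z (s+1) - z s = x (i + Nz) / (M:ℝ) := by
            rw [hv1, hv2]
            have : ((s + 1 - (i + Nz - Mz) : ℤ):ℝ) = ((s - (i + Nz - Mz) : ℤ):ℝ) + 1 := by
              push_cast; ring
            rw [this]; field_simp; ring
          have hsq : (z s - z (s+1))^2 ≤ 1/(M:ℝ)^2 := by
            have he : (z s - z (s+1))^2 = (x (i + Nz) / (M:ℝ))^2 := by
              rw [show z s - z (s+1) = -(z (s+1) - z s) from by ring, hdiff]; ring
            rw [he, div_pow]
            apply div_le_div_of_nonneg_right ?_ (by positivity)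
            · nlinarith [hxN.1, hxN.2]
          have := hVub (z (s+1))
          linarith)
      rw [hcard, nsmul_eq_mul] at this
      linarith
    have hM2expand : (M:ℝ) * (1/2*(1/(M:ℝ)^2) + 2*Δ^2) = 1/2*(1/(M:ℝ)) + 2*(M:ℝ)*Δ^2 := by
      field_simp
    rw [hM2expand] at hzone1 hzone3
    linarith
  -- final contradiction
  have hfin1 : 1/(M:ℝ) ≤ Δ := by
    rw [div_le_iff₀ hMr]
    have : Δ * (1/Δ) ≤ Δ * (M:ℝ) := mul_le_mul_of_nonneg_left hM1 hΔ0.le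
    rw [mul_one_div, div_self (ne_of_gt hΔ0)] at this
    linarith
  have hfin2 : 4*(M:ℝ)*Δ^2 ≤ 4*Δ + 4*Δ^2 := by
    have hh2 := mul_le_mul_of_nonneg_right hM2 (by positivity : (0:ℝ) ≤ 4*Δ^2)
    have e : (1/Δ + 1)*(4*Δ^2) = 4*Δ + 4*Δ^2 := by field_simp
    rw [e] at hh2; linarith
  have hfin3 : 6*Δ ≤ (N:ℝ) * (Δ^2/4) := by
    have h6 : (24/Δ) * (Δ^2/4) ≤ (N:ℝ) * (Δ^2/4) :=
      mul_le_mul_of_nonneg_right hN1 (by positivity)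
    have he : (24/Δ) * (Δ^2/4) = 6*Δ := by field_simp; ring
    linarith [he ▸ h6]
  nlinarith [key, hxlow, hzup]

set_option maxHeartbeats 1000000 in
/-- for u(x) = Δ²(1 − cos 2πx) with 0 < Δ ≤ 1/(2π), a minimal and
stationary configuration with x_{i−1} < x_i < x_{i+1} and x_i ∈ [1/4, 3/4] satisfies
x_{i+1} − x_i ≥ Δ/2. -/
theorem stmt14 (Δ : ℝ) (hΔ0 : 0 < Δ) (hΔ : Δ ≤ 1 / (2 * π))
    (u : ℝ → ℝ) (hu : ∀ t, u t = Δ ^ 2 * (1 - Real.cos (2 * π * t)))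
    (h : ℝ → ℝ → ℝ) (hh : ∀ x y, h x y = 1 / 2 * (x - y) ^ 2 + u y)
    (x : ℤ → ℝ) (hmin : IsMinimalConfig h x)
    (hstat : ∀ i : ℤ, x (i + 1) - x i = x i - x (i - 1) + deriv u (x i))
    (i : ℤ) (h1 : x (i - 1) < x i) (h2 : x i < x (i + 1))
    (hxi : x i ∈ Set.Icc (1 / 4 : ℝ) (3 / 4)) :
    Δ / 2 ≤ x (i + 1) - x i := by
  by_contra hq
  push_neg at hq
  obtain ⟨hxi1, hxi2⟩ := hxi
  have hπ : (0:ℝ) < π := Real.pi_pos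
  have hπ3 : (3:ℝ) < π := Real.pi_gt_three
  -- replace h and u by the explicit potential V
  set V : ℝ → ℝ := fun t => Δ ^ 2 * (1 - Real.cos (2 * π * t)) with hVdef
  have huV : u = V := by funext t; rw [hu t]
  have hmin' : IsMinimalConfig (fun a b => 1/2*(a-b)^2 + V b) x := by
    have hF : h = fun a b => 1/2*(a-b)^2 + V b := by
      funext a b; rw [hh a b, huV]
    rwa [hF] at hmin
  rw [huV] at hstat
  -- derivative of V
  have hderiv : ∀ t : ℝ, deriv V t = 2*π*Δ^2 * Real.sin (2*π*t) := by
    intro t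
    have hd1 : HasDerivAt (fun t : ℝ => 2*π*t) (2*π) t := by
      simpa using (hasDerivAt_id t).const_mul (2*π)
    have hd2 : HasDerivAt (fun t : ℝ => Real.cos (2*π*t)) (-Real.sin (2*π*t) * (2*π)) t :=
      (Real.hasDerivAt_cos (2*π*t)).comp t hd1
    have hd3 : HasDerivAt (fun t : ℝ => Δ^2 * (1 - Real.cos (2*π*t)))
        (Δ^2 * (0 - (-Real.sin (2*π*t) * (2*π)))) t :=
      ((hasDerivAt_const t (1:ℝ)).sub hd2).const_mul (Δ^2)
    rw [hVdef, hd3.deriv]; ring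
  -- basic bounds
  have h2πΔ : 2*π*Δ ≤ 1 := by
    have := (le_div_iff₀ (by positivity : (0:ℝ) < 2*π)).mp hΔ
    nlinarith [this]
  have hΔ6 : Δ ≤ 1/6 := by nlinarith [mul_nonneg hΔ0.le (sub_nonneg.mpr hπ3.le)]
  have hq0 : 0 < x (i+1) - x i := by linarith
  -- the product of the two gaps at i
  have hxp : x i - x (i-1) = (x (i+1) - x i) - 2*π*Δ^2*Real.sin (2*π*(x i)) := by
    have := hstat i; rw [hderiv (x i)] at this; linarith
  have hPub : (x i - x (i-1)) * (x (i+1) - x i) < 3/4*Δ^2 := by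
    rw [hxp]
    have hs1 : -1 ≤ Real.sin (2*π*(x i)) := Real.neg_one_le_sin _
    have hs2 : Real.sin (2*π*(x i)) ≤ 1 := Real.sin_le_one _
    have e1 : (x (i+1) - x i)^2 < Δ^2/4 := by nlinarith
    have hK : (0:ℝ) < 2*π*Δ^2 := by positivity
    have e2 : 2*π*Δ^2*(x (i+1) - x i) ≤ Δ^2/2 := by
      nlinarith [mul_lt_mul_of_pos_left hq hK,
        mul_le_mul_of_nonneg_right h2πΔ (by positivity : (0:ℝ) ≤ Δ^2/2)]
    nlinarith [mul_nonneg (mul_nonneg (by positivity : (0:ℝ) ≤ 2*π*Δ^2) hq0.le)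
      (by linarith : (0:ℝ) ≤ 1 + Real.sin (2*π*(x i)))]
  have hcos : Real.cos (2*π*(x i)) ≤ 0 := by
    apply Real.cos_nonpos_of_pi_div_two_le_of_le
    · nlinarith
    · nlinarith
  have huc : Δ^2 ≤ V (x i) := by
    simp only [hVdef]; nlinarith [sq_nonneg Δ]
  have hVub : ∀ y : ℝ, V y ≤ 2*Δ^2 := by
    intro y; simp only [hVdef]; nlinarith [Real.neg_one_le_cos (2*π*y), sq_nonneg Δ]
  have hV0 : V 0 = 0 := by simp [hVdef]
  -- avoidance of the wells
  have havoid : ∀ j : ℤ, i+1 ≤ j → Δ^2/4 < V (x j) := by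
    intro j hj
    have hg := gap_lemma V x hmin' i j hj
    linarith
  have hcos34 : ∀ j : ℤ, i+1 ≤ j → Real.cos (2*π*(x j)) < 3/4 := by
    intro j hj
    have := havoid j hj
    simp only [hVdef] at this
    nlinarith
  -- insertion of a point at an integer between consecutive points is impossible
  have hins : ∀ m : ℤ, i+1 ≤ m → ∀ n : ℤ,
      0 < ((n:ℝ) - x m) * (x (m+1) - (n:ℝ)) → False := by
    intro m hm n hpos
    have hVn : V (n:ℝ) = 0 := by
      simp only [hVdef]
      rw [show 2*π*(n:ℝ) = (n:ℝ)*(2*π) by ring, Real.cos_int_mul_two_pi]; ring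
    have := ins_lemma V x hmin' i m hm (n:ℝ)
    rw [hVn] at this
    linarith [pow_pos hΔ0 2]
  -- the whole forward orbit is trapped in (0,1)
  have htrap : ∀ m : ℤ, i ≤ m → 0 < x m ∧ x m < 1 := by
    refine Int.le_induction ?_ ?_
    · constructor <;> linarith
    · intro m hm IH
      rcases eq_or_lt_of_le hm with heq | hlt
      · subst heq
        constructor
        · linarith
        · linarith
      · have hm1 : i + 1 ≤ m := hlt
        have hc := hcos34 (m+1) (by omega)
        have hne1 : x (m+1) ≠ 1 := by
          intro he; rw [he, mul_one, Real.cos_two_pi] at hc; norm_num at hc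
        have hne0 : x (m+1) ≠ 0 := by
          intro he; rw [he, mul_zero, Real.cos_zero] at hc; norm_num at hc
        have hgt : ¬ (1 < x (m+1)) := by
          intro hgt
          exact hins m hm1 1 (by push_cast; nlinarith [IH.2])
        have hlt0 : ¬ (x (m+1) < 0) := by
          intro hlt0
          exact hins m hm1 0 (by push_cast; nlinarith [IH.1])
        constructor
        · rcases lt_or_eq_of_le (not_lt.mp hlt0) with h' | h'
          · exact h'
          · exact absurd h'.symm hne0
        · rcases lt_or_eq_of_le (not_lt.mp hgt) with h' | h'
          · exact h'
          · exact absurd h' hne1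
  exact dive_lemma Δ hΔ0 hΔ6 V hV0 hVub x hmin' i havoid htrap
end

section
/- Let ω be irrational with denominators q_n, and fix m, n ∈ ℕ. Suppose every line momentum of a tree of order k is an integer ν with |ν| ≤ q_m k. If q_m k < q_{n+m}, then every nonzero such ν satisfies ‖ων‖ > 1/(2 q_{n+m}); in particular there is no nonzero integer ν with |ν| ≤ q_m k and ‖ων‖ ≤ 1/(2 q_{n+m}). -/
/-- Distance from a real number to the nearest integer: ‖x‖ = inf_{y ∈ ℤ} |x − y|. -/
noncomputable def nearestIntDist (x : ℝ) : ℝ := |x - round x|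

section Stmt16Aux


open GenContFract
open GenContFract (of)

variable {v : ℝ}

-- not terminated anywhere
lemma my_not_term (hv : Irrational v) (j : ℕ) : ¬(of v).TerminatedAt j := by
  intro h
  obtain ⟨q, hq⟩ := (terminates_iff_rat v).mp ⟨j, h⟩
  exact hv ⟨q, hq.symm⟩

lemma my_stream_some (hv : Irrational v) (j : ℕ) :
    ∃ ifp, IntFractPair.stream v j = some ifp ∧ 0 < ifp.fr ∧ ifp.fr < 1 := by
  have h1 : IntFractPair.stream v (j + 1) ≠ none := by
    intro h
    exact my_not_term hv j (of_terminatedAt_n_iff_succ_nth_intFractPair_stream_eq_none.2 h)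
  have h0 : IntFractPair.stream v j ≠ none := by
    intro h
    exact h1 (IntFractPair.succ_nth_stream_eq_none_iff.2 (Or.inl h))
  obtain ⟨ifp, hifp⟩ := Option.ne_none_iff_exists'.1 h0
  refine ⟨ifp, hifp, ?_, IntFractPair.nth_stream_fr_lt_one hifp⟩
  rcases (IntFractPair.nth_stream_fr_nonneg hifp).lt_or_eq with h | h
  · exact h
  · exact absurd (IntFractPair.stream_eq_none_of_fr_eq_zero hifp h.symm) h1

lemma my_contsAux_int (hv : Irrational v) (j : ℕ) :
    ∃ a b : ℤ, ((of v).contsAux j).a = (a : ℝ) ∧ ((of v).contsAux j).b = (b : ℝ) := by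
  induction j using Nat.twoStepInduction with
  | zero => exact ⟨1, 0, by simp [zeroth_contAux_eq_one_zero]⟩
  | one =>
    refine ⟨⌊v⌋, 1, ?_⟩
    rw [first_contAux_eq_h_one, of_h_eq_floor]
    simp
  | more j ih1 ih2 =>
    obtain ⟨gp, hgp⟩ := Option.ne_none_iff_exists'.1 (my_not_term hv j)
    have ha1 : gp.a = 1 := of_partNum_eq_one (partNum_eq_s_a hgp)
    obtain ⟨z, hz⟩ := exists_int_eq_of_partDen (partDen_eq_s_b hgp)
    obtain ⟨a0, b0, ha0, hb0⟩ := ih1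
    obtain ⟨a1, b1, ha1', hb1'⟩ := ih2
    have hrec := contsAux_recurrence hgp (rfl : (of v).contsAux j = _)
      (rfl : (of v).contsAux (j + 1) = _)
    refine ⟨z * a1 + a0, z * b1 + b0, ?_, ?_⟩ <;>
      rw [hrec] <;> simp [ha1, hz, ha0, hb0, ha1', hb1'] <;> push_cast <;> ring

lemma my_den_pos (hv : Irrational v) (j : ℕ) : (1 : ℝ) ≤ (of v).dens j := by
  have h := succ_nth_fib_le_of_nth_den (v := v) (n := j)
    (Or.inr (my_not_term hv (j - 1)))
  have : (1 : ℝ) ≤ (Nat.fib (j + 1) : ℝ) := by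
    exact_mod_cast Nat.one_le_iff_ne_zero.2 (Nat.fib_pos.2 j.succ_pos).ne'
  linarith

/-- the key formula: `v * Bⱼ - Aⱼ = (-1)^j / D` with `0 < D < 2 * Bⱼ₊₁`. -/
lemma my_eps (hv : Irrational v) (j : ℕ) :
    ∃ D : ℝ, 0 < D ∧ D < 2 * (of v).dens (j + 1) ∧
      v * (of v).dens j - (of v).nums j = (-1) ^ j / D := by
  obtain ⟨ifp, hifp, hfr0, hfr1⟩ := my_stream_some hv j
  have hfrne : ifp.fr ≠ 0 := hfr0.ne'
  set B : ℝ := ((of v).contsAux (j + 1)).b with hB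
  set pB : ℝ := ((of v).contsAux j).b with hpB
  have hBden : (of v).dens j = B := by
    rw [den_eq_conts_b, nth_cont_eq_succ_nth_contAux]
  have hB1 : (1 : ℝ) ≤ B := hBden ▸ my_den_pos hv j
  have hpB0 : (0 : ℝ) ≤ pB := zero_le_of_contsAux_b
  have hinv : 1 < ifp.fr⁻¹ := by
    have h := mul_inv_cancel₀ hfrne
    have : 0 < ifp.fr⁻¹ := inv_pos.2 hfr0
    nlinarith
  have hfrB : 1 ≤ ifp.fr⁻¹ * B := by nlinarith
  set D : ℝ := ifp.fr⁻¹ * B + pB with hD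
  have hDpos : 0 < D := by rw [hD]; linarith
  refine ⟨D, hDpos, ?_, ?_⟩
  · -- D < 2 * dens (j+1)
    have hs : (of v).s.get? j = some ⟨1, (IntFractPair.of ifp.fr⁻¹).b⟩ :=
      get?_of_eq_some_of_get?_intFractPair_stream_fr_ne_zero hifp hfrne
    have hrec := contsAux_recurrence hs (rfl : (of v).contsAux j = _)
      (rfl : (of v).contsAux (j + 1) = _)
    have hden1 : (of v).dens (j + 1) = (⌊ifp.fr⁻¹⌋ : ℝ) * B + pB := by
      rw [den_eq_conts_b, nth_cont_eq_succ_nth_contAux, hrec]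
      simp [IntFractPair.of, hB, hpB]
    have hfloor : ifp.fr⁻¹ < (⌊ifp.fr⁻¹⌋ : ℝ) + 1 := Int.lt_floor_add_one _
    have hmono : B ≤ (of v).dens (j + 1) := by
      rw [← hBden]; exact of_den_mono
    rw [hD]
    nlinarith
  · -- the formula
    have hsub := sub_convs_eq hifp
    simp only [if_neg hfrne] at hsub
    have hconv : (of v).convs j = (of v).nums j / B := by
      rw [conv_eq_num_div_den, hBden]
    rw [hconv] at hsub
    rw [hBden]
    have hBne : B ≠ 0 := by linarith
    have hDne : D ≠ 0 := hDpos.ne'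
    have h2 : v * B - (of v).nums j = (v - (of v).nums j / B) * B := by field_simp
    rw [h2, hsub, hD, ← hB, ← hpB]
    field_simp

lemma my_abs_le_abs_add (a b : ℝ) (h : 0 ≤ a * b) : |b| ≤ |a + b| := by
  nlinarith [sq_abs (a + b), sq_abs b, abs_nonneg (a + b), abs_nonneg b, sq_nonneg a]

set_option maxHeartbeats 1000000 in
lemma my_key (hv : Irrational v) (N : ℕ) (ν p : ℤ) (hν : ν ≠ 0)
    (hlt : |(ν : ℝ)| < (of v).dens (N + 1)) :
    1 / (2 * (of v).dens (N + 1)) < |v * ν - p| := by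
  -- integer values of numerators and denominators
  obtain ⟨a1, b1, ha1, hb1⟩ := my_contsAux_int hv (N + 1)
  obtain ⟨a2, b2, ha2, hb2⟩ := my_contsAux_int hv (N + 2)
  have hdN : (of v).dens N = (b1 : ℝ) := by
    rw [den_eq_conts_b, nth_cont_eq_succ_nth_contAux]; exact hb1
  have hdN1 : (of v).dens (N + 1) = (b2 : ℝ) := by
    rw [den_eq_conts_b, nth_cont_eq_succ_nth_contAux]; exact hb2
  have hnN : (of v).nums N = (a1 : ℝ) := by
    rw [num_eq_conts_a, nth_cont_eq_succ_nth_contAux]; exact ha1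
  have hnN1 : (of v).nums (N + 1) = (a2 : ℝ) := by
    rw [num_eq_conts_a, nth_cont_eq_succ_nth_contAux]; exact ha2
  have hb1posR : (1 : ℝ) ≤ (b1 : ℝ) := hdN ▸ my_den_pos hv N
  have hb2posR : (1 : ℝ) ≤ (b2 : ℝ) := hdN1 ▸ my_den_pos hv (N + 1)
  have hb1pos : (1 : ℤ) ≤ b1 := by exact_mod_cast hb1posR
  have hb2pos : (1 : ℤ) ≤ b2 := by exact_mod_cast hb2posR
  -- the determinant identity
  have hdetR : ((of v).contsAux (N + 1)).a * ((of v).contsAux (N + 2)).b -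
      ((of v).contsAux (N + 1)).b * ((of v).contsAux (N + 2)).a = (-1) ^ (N + 1) :=
    SimpContFract.determinant (s := SimpContFract.of v) (my_not_term hv N)
  rw [ha1, hb1, ha2, hb2] at hdetR
  set e : ℤ := (-1) ^ (N + 1) with he
  have hdetZ : a1 * b2 - b1 * a2 = e := by exact_mod_cast hdetR
  have he2 : e * e = 1 := by
    rw [he, ← pow_add]
    exact Even.neg_one_pow ⟨N + 1, by ring⟩
  set x : ℤ := e * (a1 * ν - b1 * p) with hxdef
  set y : ℤ := e * (b2 * p - a2 * ν) with hydef
  have hxy1 : x * b2 + y * b1 = ν := by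
    rw [hxdef, hydef]; linear_combination (e * ν) * hdetZ + ν * he2
  have hxy2 : x * a2 + y * a1 = p := by
    rw [hxdef, hydef]; linear_combination (e * p) * hdetZ + p * he2
  -- real versions
  have hR1 : (x : ℝ) * (of v).dens (N + 1) + (y : ℝ) * (of v).dens N = (ν : ℝ) := by
    rw [hdN1, hdN]; exact_mod_cast hxy1
  have hR2 : (x : ℝ) * (of v).nums (N + 1) + (y : ℝ) * (of v).nums N = (p : ℝ) := by
    rw [hnN1, hnN]; exact_mod_cast hxy2
  set ε : ℝ := v * (of v).dens N - (of v).nums N with hε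
  set ε' : ℝ := v * (of v).dens (N + 1) - (of v).nums (N + 1) with hε'
  have hid : v * ν - p = (x : ℝ) * ε' + (y : ℝ) * ε := by
    rw [hε, hε']; linear_combination hR2 - v * hR1
  obtain ⟨D, hD0, hDlt, hDeq⟩ := my_eps hv N
  obtain ⟨D', hD'0, _, hD'eq⟩ := my_eps hv (N + 1)
  have hdpos : (0 : ℝ) < (of v).dens (N + 1) := by linarith
  have habsε : |ε| = 1 / D := by
    rw [hε, hDeq, abs_div, abs_pow, abs_neg, abs_one, one_pow, abs_of_pos hD0]
  have hbound : 1 / (2 * (of v).dens (N + 1)) < |ε| := by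
    rw [habsε]
    apply one_div_lt_one_div_of_lt hD0
    linarith
  -- y cannot be zero
  have hy0 : y ≠ 0 := by
    intro hy0
    rw [hy0] at hxy1
    simp only [zero_mul, add_zero] at hxy1
    have hx0 : x ≠ 0 := by
      intro hx0
      rw [hx0, zero_mul] at hxy1
      exact hν hxy1.symm
    have h1x : (1 : ℤ) ≤ |x| := Int.one_le_abs hx0
    have : b2 ≤ |ν| := by
      calc b2 = 1 * b2 := (one_mul b2).symm
        _ ≤ |x| * b2 := by apply mul_le_mul_of_nonneg_right h1x; linarith
        _ = |x| * |b2| := by rw [abs_of_pos (by linarith : (0:ℤ) < b2)]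
        _ = |x * b2| := (abs_mul x b2).symm
        _ = |ν| := by rw [hxy1]
    have : (b2 : ℝ) ≤ |(ν : ℝ)| := by exact_mod_cast this
    rw [hdN1] at hlt; linarith
  have hy1 : (1 : ℝ) ≤ |(y : ℝ)| := by
    have := Int.one_le_abs hy0
    exact_mod_cast this
  -- same-sign property
  have hsame : 0 ≤ ((x : ℝ) * ε') * ((y : ℝ) * ε) := by
    rcases eq_or_ne x 0 with hx0 | hx0
    · simp [hx0]
    · -- x and y have opposite signs
      have hνb2 : |ν| < b2 := by
        have : |(ν : ℝ)| < (b2 : ℝ) := by rw [← hdN1]; exact hlt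
        exact_mod_cast this
      have hxy_neg : x * y < 0 := by
        rcases lt_or_gt_of_ne hx0 with hx | hx <;> rcases lt_or_gt_of_ne hy0 with hy | hy
        · -- x < 0, y < 0 : ν ≤ -(b2+b1)
          exfalso
          have h1 : x * b2 ≤ -b2 := by nlinarith
          have h2 : y * b1 ≤ -b1 := by nlinarith
          have := neg_abs_le ν
          omega
        · exact mul_neg_of_neg_of_pos hx hy
        · exact mul_neg_of_pos_of_neg hx hy
        · exfalso
          have h1 : b2 ≤ x * b2 := by nlinarith
          have h2 : b1 ≤ y * b1 := by nlinarith
          have := le_abs_self ν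
          omega
      have hεneg : ε' * ε < 0 := by
        rw [hε', hε, hD'eq, hDeq, div_mul_div_comm]
        have hpow : ((-1 : ℝ)) ^ (N + 1) * (-1) ^ N = -1 := by
          rw [← pow_add]
          exact Odd.neg_one_pow ⟨N, by ring⟩
        rw [hpow]
        apply div_neg_of_neg_of_pos (by norm_num)
        positivity
      have hxyR : (0 : ℝ) < -((x : ℝ) * (y : ℝ)) := by
        have : (x : ℝ) * (y : ℝ) < 0 := by exact_mod_cast hxy_neg
        linarith
      have hprod := mul_pos hxyR (by linarith : (0 : ℝ) < -(ε' * ε))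
      have heq : ((x : ℝ) * ε') * ((y : ℝ) * ε) = (-((x : ℝ) * (y : ℝ))) * (-(ε' * ε)) := by ring
      rw [heq]
      exact hprod.le
  calc 1 / (2 * (of v).dens (N + 1)) < |ε| := hbound
    _ ≤ |(y : ℝ) * ε| := by
        rw [abs_mul]
        nlinarith [abs_nonneg ε]
    _ ≤ |(x : ℝ) * ε' + (y : ℝ) * ε| := my_abs_le_abs_add _ _ hsame
    _ = |v * ν - p| := by rw [hid]


end Stmt16Aux

open GenContFract in
open GenContFract (of) in
/-- if q_m k < q_{n+m} (q_j the continued fraction denominators of the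
irrational ω), then every nonzero integer ν with |ν| ≤ q_m k satisfies
‖ων‖ > 1/(2 q_{n+m}); in particular no nonzero such ν has ‖ων‖ ≤ 1/(2 q_{n+m}). -/
theorem stmt16 (ω : ℝ) (hω : Irrational ω)
    (q : ℕ → ℝ) (hq : ∀ j, q j = (GenContFract.of ω).dens j)
    (m n k : ℕ) (hk : q m * k < q (n + m)) :
    (∀ ν : ℤ, ν ≠ 0 → |(ν : ℝ)| ≤ q m * k →
      1 / (2 * q (n + m)) < nearestIntDist (ω * ν)) ∧
    ¬ ∃ ν : ℤ, ν ≠ 0 ∧ |(ν : ℝ)| ≤ q m * k ∧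
      nearestIntDist (ω * ν) ≤ 1 / (2 * q (n + m)) := by
  have main : ∀ ν : ℤ, ν ≠ 0 → |(ν : ℝ)| ≤ q m * k →
      1 / (2 * q (n + m)) < nearestIntDist (ω * ν) := by
    intro ν hν habs
    have hlt : |(ν : ℝ)| < (of ω).dens (n + m) := by
      rw [← hq]; exact lt_of_le_of_lt habs hk
    rcases Nat.eq_zero_or_eq_succ_pred (n + m) with hN | hN
    · exfalso
      rw [hN, zeroth_den_eq_one] at hlt
      have : (1 : ℝ) ≤ |(ν : ℝ)| := by exact_mod_cast Int.one_le_abs hν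
      linarith
    · rw [hq, hN]
      rw [hN] at hlt
      exact my_key hω _ ν (round (ω * ν)) hν hlt
  refine ⟨main, ?_⟩
  rintro ⟨ν, h1, h2, h3⟩
  exact absurd h3 (not_le.2 (main ν h1 h2))
end
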